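/- arXiv:2112.11577 — 2 statements merged into one kernel-verified Lean document; each statement's English description precedes it below -/
import Mathlib

section
/- Let D ≥ 2, σ > 0, b > 0, and t : Fin D → ℝ such that t i ≠ t j for some pair of indices i ≠ j. Define ψ : ℝ → ℝ^D by ψ(s)_i = exp(−b(s − t i)²/(2σ²)). Then ψ is differentiable and its derivative ψ'(s) ∈ ℝ^D is nonzero for every s ∈ ℝ. -/
open Real

theorem hasDerivAt_gaussian (b σ c s : ℝ) :
    HasDerivAt (fun s => exp (-(b * (s - c) ^ 2) / (2 * σ ^ 2)))
      (-(b * (s - c) / σ ^ 2) * exp (-(b * (s - c) ^ 2) / (2 * σ ^ 2))) s := by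
  have hquad : HasDerivAt (fun s => -(b * (s - c) ^ 2) / (2 * σ ^ 2))
      (-(b * (2 * (s - c) ^ 1 * 1)) / (2 * σ ^ 2)) s :=
    ((((hasDerivAt_id s).sub_const c).pow 2).const_mul b).neg.div_const _
  convert hquad.exp using 1
  ring

theorem deriv_gaussian_eq_zero_iff {b σ : ℝ} (hb : b ≠ 0) (hσ : σ ≠ 0) (c s : ℝ) :
    deriv (fun s => exp (-(b * (s - c) ^ 2) / (2 * σ ^ 2))) s = 0 ↔ s = c := by
  rw [(hasDerivAt_gaussian b σ c s).deriv]
  simp [exp_ne_zero, hb, hσ, sub_eq_zero]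

theorem PiLp.deriv_apply {𝕜 ι : Type*} {E : ι → Type*} [NontriviallyNormedField 𝕜]
    [∀ i, NormedAddCommGroup (E i)] [∀ i, NormedSpace 𝕜 (E i)] [Fintype ι] {p : ENNReal}
    [Fact (1 ≤ p)] {f : 𝕜 → PiLp p E} {x : 𝕜} (hf : DifferentiableAt 𝕜 f x) (i : ι) :
    deriv (fun x => f x i) x = deriv f x i :=
  ((PiLp.hasFDerivAt_apply p (f x) i).comp_hasDerivAt x hf.hasDerivAt).deriv

theorem superGaussian_profile_deriv_ne_zero_general
    (D : ℕ) (σ b : ℝ) (hσ : 0 < σ) (hb : 0 < b)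
    (t : Fin D → ℝ) (ht : ∃ i j : Fin D, i ≠ j ∧ t i ≠ t j)
    (ψ : ℝ → EuclideanSpace ℝ (Fin D))
    (hψ : ∀ s, ψ s = fun i : Fin D => Real.exp (-(b * (s - t i) ^ 2) / (2 * σ ^ 2))) :
    Differentiable ℝ ψ ∧ ∀ s : ℝ, deriv ψ s ≠ 0 := by
  have hcomp (i : Fin D) : (fun s => ψ s i) = fun s => exp (-(b * (s - t i) ^ 2) / (2 * σ ^ 2)) :=
    funext fun s => congrFun (hψ s) i
  have hdiff : Differentiable ℝ ψ := differentiable_euclidean.2 fun i => by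
    rw [hcomp i]
    exact fun s => (hasDerivAt_gaussian b σ (t i) s).differentiableAt
  refine ⟨hdiff, fun s hs => ?_⟩
  have hcenter (k : Fin D) : s = t k := by
    rw [← deriv_gaussian_eq_zero_iff hb.ne' hσ.ne', ← hcomp k, PiLp.deriv_apply (hdiff s), hs]
    rfl
  obtain ⟨i, j, -, hij⟩ := ht
  exact hij ((hcenter i).symm.trans (hcenter j))

/-- The scalar profile curve `ψ(s)_i = exp(−b(s − t i)²/(2σ²))` of the super-Gaussian
embedding is differentiable with nowhere-vanishing derivative, provided two centers
are distinct. -/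
theorem superGaussian_profile_deriv_ne_zero
    (D : ℕ) (hD : 2 ≤ D) (σ b : ℝ) (hσ : 0 < σ) (hb : 0 < b)
    (t : Fin D → ℝ) (ht : ∃ i j : Fin D, i ≠ j ∧ t i ≠ t j)
    (ψ : ℝ → EuclideanSpace ℝ (Fin D))
    (hψ : ∀ s, ψ s = fun i : Fin D => Real.exp (-(b * (s - t i) ^ 2) / (2 * σ ^ 2))) :
    Differentiable ℝ ψ ∧ ∀ s : ℝ, deriv ψ s ≠ 0 :=
  superGaussian_profile_deriv_ne_zero_general D σ b hσ hb t ht ψ hψ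
end

section
/- Let D ≥ 2, σ > 0, b > 0, and t : Fin D → ℝ such that t i ≠ t j for some pair of indices i ≠ j. Define ψ : ℝ → ℝ^D by ψ(s)_i = exp(−b(s − t i)²/(2σ²)). Then for every compact set K ⊆ ℝ, the restriction of ψ to K is a homeomorphism onto its image ψ(K) (equivalently, the restricted map K → ℝ^D is a topological embedding). -/
/-!
A continuous injection from a compact space into a Hausdorff space is a closed embedding, so
only injectivity of `ψ` needs an argument. Equal values `ψ s = ψ s'` give equal squared
distances `(s - t k)² = (s' - t k)²` to every centre; for `s ≠ s'` this forces every centre to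
be the midpoint of `s` and `s'`, which two distinct centres cannot both be.
-/

open Topology Set

theorem IsCompact.isEmbedding_domRestrict {X Y : Type*} [TopologicalSpace X]
    [TopologicalSpace Y] [T2Space Y] {f : X → Y} {K : Set X} (hK : IsCompact K)
    (hf : ContinuousOn f K) (hinj : InjOn f K) : IsEmbedding (K.domRestrict f) :=
  haveI := isCompact_iff_compactSpace.mp hK
  (hf.domRestrict.isClosedEmbedding hinj.injective).isEmbedding

theorem eq_of_sq_sub_eq_sq_sub {s s' c₁ c₂ : ℝ} (hc : c₁ ≠ c₂)
    (h₁ : (s - c₁) ^ 2 = (s' - c₁) ^ 2) (h₂ : (s - c₂) ^ 2 = (s' - c₂) ^ 2) : s = s' := by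
  by_contra hs
  have midpoint_eq : ∀ c, (s - c) ^ 2 = (s' - c) ^ 2 → s + s' = 2 * c := fun c h => by
    have : (s - s') * (s + s' - 2 * c) = 0 := by linear_combination h
    linarith [(mul_eq_zero.mp this).resolve_left (sub_ne_zero.mpr hs)]
  exact hc (by linarith [midpoint_eq c₁ h₁, midpoint_eq c₂ h₂])

theorem sq_sub_eq_sq_sub_of_exp_eq {b σ s s' c : ℝ} (hb : b ≠ 0) (hσ : σ ≠ 0)
    (h : Real.exp (-(b * (s - c) ^ 2) / (2 * σ ^ 2)) =
      Real.exp (-(b * (s' - c) ^ 2) / (2 * σ ^ 2))) :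
    (s - c) ^ 2 = (s' - c) ^ 2 := by
  have := Real.exp_injective h
  field_simp at this
  linarith

theorem superGaussian_profile_embedding_on_compact_general
    (D : ℕ) (σ b : ℝ) (hσ : 0 < σ) (hb : 0 < b)
    (t : Fin D → ℝ) (ht : ∃ i j : Fin D, i ≠ j ∧ t i ≠ t j)
    (ψ : ℝ → EuclideanSpace ℝ (Fin D))
    (hψ : ∀ s, ψ s = fun i : Fin D => Real.exp (-(b * (s - t i) ^ 2) / (2 * σ ^ 2))) :
    ∀ K : Set ℝ, IsCompact K → Topology.IsEmbedding (fun x : K => ψ x) := by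
  intro K hK
  have hcont : Continuous ψ := continuous_induced_rng.2 <| by
    change Continuous fun s => (ψ s).ofLp
    simp only [hψ]
    fun_prop
  obtain ⟨i, j, -, hij⟩ := ht
  have hinj : Function.Injective ψ := fun s s' h => by
    have hk : ∀ k, (s - t k) ^ 2 = (s' - t k) ^ 2 := fun k =>
      sq_sub_eq_sq_sub_of_exp_eq hb.ne' hσ.ne' <| by
        simpa only [hψ] using congrArg (fun v : EuclideanSpace ℝ (Fin D) => v k) h
    exact eq_of_sq_sub_eq_sq_sub hij (hk i) (hk j)
  exact hK.isEmbedding_domRestrict hcont.continuousOn hinj.injOn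

/-- The scalar profile curve `ψ(s)_i = exp(−b(s − t i)²/(2σ²))` of the super-Gaussian
embedding, restricted to any compact set `K ⊆ ℝ`, is a topological embedding
(homeomorphism onto its image). -/
theorem superGaussian_profile_embedding_on_compact
    (D : ℕ) (hD : 2 ≤ D) (σ b : ℝ) (hσ : 0 < σ) (hb : 0 < b)
    (t : Fin D → ℝ) (ht : ∃ i j : Fin D, i ≠ j ∧ t i ≠ t j)
    (ψ : ℝ → EuclideanSpace ℝ (Fin D))
    (hψ : ∀ s, ψ s = fun i : Fin D => Real.exp (-(b * (s - t i) ^ 2) / (2 * σ ^ 2))) :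
    ∀ K : Set ℝ, IsCompact K → Topology.IsEmbedding (fun x : K => ψ x) :=
  superGaussian_profile_embedding_on_compact_general D σ b hσ hb t ht ψ hψ
end
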